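/- Let U, W ⊆ Kⁿ be K-vector subspaces of the same dimension. Then: (1) res(U) = res(W) if and only if Δ(U, W) < 1; (2) for every M ∈ GLₙ(𝒪), Δ(U, W) = Δ(M(U), M(W)). -/

import Mathlib

noncomputable section

open scoped Classical Pointwise

section Preamble

variable {K : Type*} [Field K] {Γ : Type*} [LinearOrderedCommGroupWithZero Γ]

instance (priority := 100) : OrderBot Γ where
  bot := 0
  bot_le _ := zero_le'

/-- The max-valuation on `K^n`: `v(a) = maxᵢ v(aᵢ)`. -/
def vv (v : Valuation K Γ) {n : ℕ} (x : Fin n → K) : Γ :=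
  Finset.univ.sup fun i => v (x i)

/-- `rvEq v x y` expresses `rv(x) = rv(y)` in `RV⁽ⁿ⁾ = Kⁿ/∼`, where
`x ∼ y` iff `v(x−y) < v(x)` or `x = y = 0`. -/
def rvEq (v : Valuation K Γ) {n : ℕ} (x y : Fin n → K) : Prop :=
  vv v (x - y) < vv v x ∨ (x = 0 ∧ y = 0)

/-- Balls in `K` (with `K` itself counting as a ball). -/
def IsBall1 (v : Valuation K Γ) (B : Set K) : Prop :=
  B = Set.univ ∨ ∃ a : K, ∃ γ : Γ, γ ≠ 0 ∧
    (B = {x | v (x - a) < γ} ∨ B = {x | v (x - a) ≤ γ})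

/-- Balls in `Kⁿ` (with `Kⁿ` itself counting as a ball). -/
def IsBall (v : Valuation K Γ) {n : ℕ} (B : Set (Fin n → K)) : Prop :=
  B = Set.univ ∨ ∃ a : Fin n → K, ∃ γ : Γ, γ ≠ 0 ∧
    (B = {x | vv v (x - a) < γ} ∨ B = {x | vv v (x - a) ≤ γ})

/-- Spherical completeness: every nonempty chain of balls in `K` has nonempty
intersection. -/
def SphericallyComplete (v : Valuation K Γ) : Prop :=
  ∀ C : Set (Set K), C.Nonempty → (∀ B ∈ C, IsBall1 v B) → IsChain (· ⊆ ·) C →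
    (⋂ B ∈ C, B).Nonempty

/-- The residue field `K̄` of the valuation ring `𝒪 = {x | v x ≤ 1}`. -/
def Kbar (v : Valuation K Γ) : Type _ :=
  IsLocalRing.ResidueField v.valuationSubring

instance (v : Valuation K Γ) : Field (Kbar v) :=
  inferInstanceAs (Field (IsLocalRing.ResidueField v.valuationSubring))

/-- The residue map `res : 𝒪 → K̄`, extended by the junk value `0` outside `𝒪`. -/
def res' (v : Valuation K Γ) (x : K) : Kbar v :=
  if h : v x ≤ 1 then IsLocalRing.residue v.valuationSubring ⟨x, h⟩ else 0

/-- The coordinatewise residue map on `Kⁿ`. -/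
def resv (v : Valuation K Γ) {n : ℕ} (x : Fin n → K) : Fin n → Kbar v :=
  fun i => res' v (x i)

/-- `res(S)` for a set `S ⊆ Kⁿ`: the set of residues of points of `S ∩ 𝒪ⁿ`. -/
def resSet (v : Valuation K Γ) {n : ℕ} (S : Set (Fin n → K)) : Set (Fin n → Kbar v) :=
  resv v '' {x ∈ S | ∀ i, v (x i) ≤ 1}

/-- `dir(x) = res(K·x) ⊆ K̄ⁿ`. -/
def dirSet (v : Valuation K Γ) {n : ℕ} (x : Fin n → K) : Set (Fin n → Kbar v) :=
  resSet v {y | ∃ c : K, y = c • x}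

/-- The coordinate projection `Kⁿ → K^d` selecting the coordinates `σ 0 < σ 1 < ⋯`. -/
def proj {A : Type*} {n d : ℕ} (σ : Fin d → Fin n) (x : Fin n → A) : Fin d → A :=
  fun k => x (σ k)

/-- `σ` (a strictly increasing selection of `d` of the `n` coordinates) is an
exhibition of the `K̄`-subspace `Ū ⊆ K̄ⁿ` if the corresponding coordinate projection
`K̄ⁿ → K̄^d` restricts to an isomorphism from `Ū` onto `K̄^d`. -/
def IsExhibition (v : Valuation K Γ) {n d : ℕ} (σ : Fin d → Fin n)
    (Ubar : Submodule (Kbar v) (Fin n → Kbar v)) : Prop :=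
  StrictMono σ ∧ Set.BijOn (proj σ) (Ubar : Set (Fin n → Kbar v)) Set.univ

/-- `affdir(C)`: the `K̄`-subspace of `K̄ⁿ` generated by all `dir(x − x')`, `x, x' ∈ C`. -/
def affdir (v : Valuation K Γ) {n : ℕ} (C : Set (Fin n → K)) :
    Submodule (Kbar v) (Fin n → Kbar v) :=
  Submodule.span (Kbar v) (⋃ x ∈ C, ⋃ x' ∈ C, dirSet v (x - x'))

/-- A matrix has entries in the valuation ring `𝒪`. -/
def EntriesInO (v : Valuation K Γ) {n : ℕ} (M : Matrix (Fin n) (Fin n) K) : Prop :=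
  ∀ i j, v (M i j) ≤ 1

/-- `M ∈ GLₙ(𝒪)`: `M` is invertible, with entries in `𝒪`, and its inverse also has
entries in `𝒪`. -/
def MemGLO (v : Valuation K Γ) {n : ℕ} (M : Matrix (Fin n) (Fin n) K) : Prop :=
  EntriesInO v M ∧ ∃ N : Matrix (Fin n) (Fin n) K,
    M * N = 1 ∧ N * M = 1 ∧ EntriesInO v N

/-- The entrywise residue matrix of `M`. -/
def resM (v : Valuation K Γ) {n : ℕ} (M : Matrix (Fin n) (Fin n) K) :
    Matrix (Fin n) (Fin n) (Kbar v) :=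
  fun i j => res' v (M i j)

/-- `DeltaLE v U W γ` expresses `Δ(U, W) ≤ γ`: for every `u ∈ U` there is `w ∈ W`
with `v(u − w) ≤ v(u)·γ`. -/
def DeltaLE (v : Valuation K Γ) {n : ℕ} (U W : Submodule K (Fin n → K)) (γ : Γ) : Prop :=
  ∀ u ∈ U, ∃ w ∈ W, vv v (u - w) ≤ vv v u * γ

/-- `IsDelta v U W γ` expresses `Δ(U, W) = γ`: `γ` is the minimum of all admissible
bounds. -/
def IsDelta (v : Valuation K Γ) {n : ℕ} (U W : Submodule K (Fin n → K)) (γ : Γ) : Prop :=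
  DeltaLE v U W γ ∧ ∀ δ : Γ, DeltaLE v U W δ → γ ≤ δ

end Preamble

variable {K : Type*} [Field K] {Γ : Type*} [LinearOrderedCommGroupWithZero Γ]

/-!
Every subspace `U ⊆ Kⁿ` has a basis `u` that is orthonormal for the max-valuation,
`v(∑ cᵢ uᵢ) = maxᵢ v(cᵢ)`: scale a vector of `U` so that its largest coordinate is `1`, and
recurse into the subspace of `U` on which that coordinate vanishes. The residues of such a basis
form a basis of `res(U)`, so `dim res(U) = dim U`.

If `res(U) ⊆ res(W)`, lifting the residues of an orthonormal basis of `U` to `W` moves each basis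
vector by less than `1`, and orthonormality turns this into `Δ(U, W) < 1`. Conversely
`Δ(U, W) < 1` gives `res(U) ⊆ res(W)`, hence equality by the dimension count. Matrices in
`GLₙ(𝒪)` preserve the max-valuation, which gives the invariance of `Δ`.
-/

open Finset

section MaxValuation

lemma Finset.sup_lt_one_iff {ι : Type*} (s : Finset ι) (f : ι → Γ) :
    s.sup f < 1 ↔ ∀ i ∈ s, f i < 1 :=
  Finset.sup_lt_iff (by rw [bot_eq_zero]; exact zero_lt_one)

variable (v : Valuation K Γ) {n : ℕ}

lemma vv_le_iff {x : Fin n → K} {γ : Γ} : vv v x ≤ γ ↔ ∀ i, v (x i) ≤ γ := by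
  simp [vv]

lemma le_vv (x : Fin n → K) (i : Fin n) : v (x i) ≤ vv v x :=
  le_sup (f := fun i => v (x i)) (mem_univ i)

lemma vv_lt_one_iff {x : Fin n → K} : vv v x < 1 ↔ ∀ i, v (x i) < 1 := by
  simp [vv, sup_lt_one_iff]

lemma vv_zero : vv v (0 : Fin n → K) = 0 :=
  le_zero_iff.mp <| (vv_le_iff v).mpr fun _ => by simp

lemma vv_eq_zero_iff {x : Fin n → K} : vv v x = 0 ↔ x = 0 := by
  refine ⟨fun h => funext fun i => ?_, fun h => h ▸ vv_zero v⟩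
  simpa [h] using le_vv v x i

lemma vv_add_le (x y : Fin n → K) : vv v (x + y) ≤ max (vv v x) (vv v y) :=
  (vv_le_iff v).mpr fun i =>
    (v.map_add _ _).trans (max_le_max (le_vv v x i) (le_vv v y i))

lemma vv_sub_le (x y : Fin n → K) : vv v (x - y) ≤ max (vv v x) (vv v y) :=
  (vv_le_iff v).mpr fun i =>
    (v.map_sub _ _).trans (max_le_max (le_vv v x i) (le_vv v y i))

lemma vv_smul (c : K) (x : Fin n → K) : vv v (c • x) = v c * vv v x := by
  simp only [vv, Pi.smul_apply, smul_eq_mul, map_mul]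
  exact (Finset.apply_sup_eq_sup_comp (v c * ·) (fun _ _ => mul_max ..)
    (by simp [bot_eq_zero])).symm

lemma vv_sum_le {ι : Type*} (s : Finset ι) (f : ι → Fin n → K) {γ : Γ}
    (h : ∀ i ∈ s, vv v (f i) ≤ γ) : vv v (∑ i ∈ s, f i) ≤ γ :=
  (vv_le_iff v).mpr fun j => by
    simpa only [Finset.sum_apply] using
      v.map_sum_le fun i hi => (le_vv v (f i) j).trans (h i hi)

lemma exists_vv_eq_apply {x : Fin n → K} (hx : x ≠ 0) : ∃ i, vv v x = v (x i) := by
  obtain ⟨j, -⟩ := Function.ne_iff.mp hx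
  obtain ⟨i, -, hi⟩ := exists_mem_eq_sup univ ⟨j, mem_univ j⟩ fun i => v (x i)
  exact ⟨i, hi⟩

lemma exists_mem_vv_eq_one (U : Submodule K (Fin n → K)) (hU : U ≠ ⊥) :
    ∃ u ∈ U, ∃ i, u i = 1 ∧ vv v u = 1 := by
  obtain ⟨x, hxU, hx⟩ := (Submodule.ne_bot_iff U).mp hU
  obtain ⟨i, hi⟩ := exists_vv_eq_apply v hx
  have hxi : x i ≠ 0 := by
    rw [← v.ne_zero_iff, ← hi]
    exact (vv_eq_zero_iff v).not.mpr hx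
  refine ⟨(x i)⁻¹ • x, U.smul_mem _ hxU, i, inv_mul_cancel₀ hxi, ?_⟩
  rw [vv_smul, hi, map_inv₀, inv_mul_cancel₀ ((v.ne_zero_iff).mpr hxi)]

def IsOrthonormal {d : ℕ} (u : Fin d → Fin n → K) : Prop :=
  ∀ c : Fin d → K, vv v (∑ i, c i • u i) = univ.sup fun i => v (c i)

end MaxValuation

section Orthonormal

variable {v : Valuation K Γ} {n d : ℕ} {u : Fin d → Fin n → K}

lemma IsOrthonormal.vv_le_one_iff (hu : IsOrthonormal v u) {c : Fin d → K} :
    vv v (∑ i, c i • u i) ≤ 1 ↔ ∀ i, v (c i) ≤ 1 := by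
  simp [hu c]

lemma IsOrthonormal.vv_lt_one_iff (hu : IsOrthonormal v u) {c : Fin d → K} :
    vv v (∑ i, c i • u i) < 1 ↔ ∀ i, v (c i) < 1 := by
  simp [hu c, sup_lt_one_iff]

lemma IsOrthonormal.vv_apply (hu : IsOrthonormal v u) (i : Fin d) : vv v (u i) = 1 := by
  have h : vv v (u i) = univ.sup fun j => if j = i then 1 else 0 := by
    simpa [Pi.single_apply] using hu (Pi.single i 1)
  rw [h]
  exact le_antisymm (Finset.sup_le fun j _ => by split_ifs <;> simp)
    (le_sup_of_le (mem_univ i) (by simp))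

lemma IsOrthonormal.linearIndependent (hu : IsOrthonormal v u) : LinearIndependent K u := by
  refine Fintype.linearIndependent_iff.mpr fun c hc i => ?_
  have h := hu c
  rw [hc, vv_zero, eq_comm, ← bot_eq_zero, Finset.sup_eq_bot_iff] at h
  simpa [bot_eq_zero] using h i (mem_univ i)

lemma isOrthonormal_fin_zero (u : Fin 0 → Fin n → K) : IsOrthonormal v u := fun c => by
  simp [vv_zero, bot_eq_zero]

lemma vv_smul_add_eq_max {u s : Fin n → K} {i : Fin n} (hui : u i = 1) (hu : vv v u = 1)
    (hsi : s i = 0) (c : K) : vv v (c • u + s) = max (v c) (vv v s) := by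
  have hcu : vv v (c • u) = v c := by rw [vv_smul, hu, mul_one]
  refine le_antisymm (hcu ▸ vv_add_le v _ _) (max_le ?_ ?_)
  · simpa [hui, hsi] using le_vv v (c • u + s) i
  · calc vv v s = vv v (c • u + s - c • u) := by rw [add_sub_cancel_left]
      _ ≤ max (vv v (c • u + s)) (v c) := hcu ▸ vv_sub_le v _ _
      _ ≤ vv v (c • u + s) := max_le le_rfl (by simpa [hui, hsi] using le_vv v (c • u + s) i)

lemma IsOrthonormal.cons {w : Fin d → Fin n → K} (hw : IsOrthonormal v w) {u : Fin n → K}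
    {i : Fin n} (hui : u i = 1) (hu : vv v u = 1) (hwi : ∀ j, w j i = 0) :
    IsOrthonormal v (Fin.cons u w : Fin (d + 1) → Fin n → K) := fun c => by
  have hsi : (∑ j, c j.succ • w j) i = 0 := by simp [hwi]
  rw [Fin.sum_univ_succ, Fin.univ_succ, sup_cons, sup_map]
  simp only [Fin.cons_zero, Fin.cons_succ]
  rw [vv_smul_add_eq_max hui hu hsi, hw]
  rfl

theorem exists_isOrthonormal_span_eq (v : Valuation K Γ) (U : Submodule K (Fin n → K)) :
    ∃ (d : ℕ) (u : Fin d → Fin n → K), Submodule.span K (Set.range u) = U ∧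
      IsOrthonormal v u := by
  induction hr : Module.finrank K U using Nat.strong_induction_on generalizing U with
  | _ r ih =>
  rcases eq_or_ne U ⊥ with rfl | hU
  · exact ⟨0, Fin.elim0, by simp, isOrthonormal_fin_zero _⟩
  obtain ⟨u, huU, i, hui, hu⟩ := exists_mem_vv_eq_one v U hU
  set U' := LinearMap.ker (LinearMap.proj i : (Fin n → K) →ₗ[K] K) ⊓ U
  have hu' : u ∉ U' := fun h =>
    one_ne_zero (hui.symm.trans (LinearMap.mem_ker.mp (Submodule.mem_inf.mp h).1))
  have hlt : Module.finrank K U' < r := hr ▸ Submodule.finrank_lt_finrank_of_lt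
    (lt_of_le_of_ne inf_le_right fun h => hu' (h ▸ huU))
  obtain ⟨d, w, hspan, hw⟩ := ih _ hlt U' rfl
  refine ⟨d + 1, Fin.cons u w, ?_, hw.cons hui hu fun j => ?_⟩
  · rw [Fin.range_cons, Submodule.span_insert, hspan, ← sup_inf_assoc_of_le _
      ((Submodule.span_singleton_le_iff_mem _ _).mpr huU),
      LinearMap.span_singleton_sup_ker_eq_top _ (by simp [hui]), top_inf_eq]
  · have : w j ∈ U' := hspan ▸ Submodule.subset_span ⟨j, rfl⟩
    exact (Submodule.mem_inf.mp this).1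

end Orthonormal

section Residue

variable (v : Valuation K Γ) {n : ℕ}

lemma res'_coe (a : v.valuationSubring) : res' v a = IsLocalRing.residue _ a :=
  dif_pos a.2

lemma res'_zero : res' v 0 = 0 :=
  (res'_coe v 0).trans (map_zero _)

lemma res'_add {x y : K} (hx : v x ≤ 1) (hy : v y ≤ 1) :
    res' v (x + y) = res' v x + res' v y := by
  have h := res'_coe v (⟨x, hx⟩ + ⟨y, hy⟩)
  rwa [map_add, ← res'_coe, ← res'_coe] at h

lemma res'_sub {x y : K} (hx : v x ≤ 1) (hy : v y ≤ 1) :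
    res' v (x - y) = res' v x - res' v y := by
  have h := res'_coe v (⟨x, hx⟩ - ⟨y, hy⟩)
  rwa [map_sub, ← res'_coe, ← res'_coe] at h

lemma res'_mul {x y : K} (hx : v x ≤ 1) (hy : v y ≤ 1) :
    res' v (x * y) = res' v x * res' v y := by
  have h := res'_coe v (⟨x, hx⟩ * ⟨y, hy⟩)
  rwa [map_mul, ← res'_coe, ← res'_coe] at h

lemma res'_eq_zero_iff {x : K} (hx : v x ≤ 1) : res' v x = 0 ↔ v x < 1 := by
  rw [show res' v x = _ from res'_coe v ⟨x, hx⟩]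
  exact (IsLocalRing.residue_eq_zero_iff _).trans (Valuation.mem_maximalIdeal_iff K v)

lemma exists_res'_eq (k : Kbar v) : ∃ c : K, v c ≤ 1 ∧ res' v c = k := by
  obtain ⟨a, rfl⟩ := IsLocalRing.residue_surjective (R := v.valuationSubring) k
  exact ⟨a, a.2, res'_coe v a⟩

lemma resv_zero : resv v (0 : Fin n → K) = 0 :=
  funext fun _ => res'_zero v

lemma resv_add {x y : Fin n → K} (hx : vv v x ≤ 1) (hy : vv v y ≤ 1) :
    resv v (x + y) = resv v x + resv v y :=
  funext fun i => res'_add v ((le_vv v x i).trans hx) ((le_vv v y i).trans hy)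

lemma resv_sub {x y : Fin n → K} (hx : vv v x ≤ 1) (hy : vv v y ≤ 1) :
    resv v (x - y) = resv v x - resv v y :=
  funext fun i => res'_sub v ((le_vv v x i).trans hx) ((le_vv v y i).trans hy)

lemma resv_smul {c : K} {x : Fin n → K} (hc : v c ≤ 1) (hx : vv v x ≤ 1) :
    resv v (c • x) = res' v c • resv v x :=
  funext fun i => res'_mul v hc ((le_vv v x i).trans hx)

lemma resv_sum {ι : Type*} (s : Finset ι) (f : ι → Fin n → K)
    (hf : ∀ i ∈ s, vv v (f i) ≤ 1) :
    resv v (∑ i ∈ s, f i) = ∑ i ∈ s, resv v (f i) := by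
  induction s using Finset.cons_induction with
  | empty => exact resv_zero v
  | cons a s ha ih =>
    rw [forall_mem_cons] at hf
    rw [sum_cons, sum_cons, resv_add v hf.1 (vv_sum_le v s f hf.2), ih hf.2]

lemma resv_eq_zero_iff {x : Fin n → K} (hx : vv v x ≤ 1) : resv v x = 0 ↔ vv v x < 1 := by
  rw [vv_lt_one_iff, funext_iff]
  exact forall_congr' fun i => res'_eq_zero_iff v ((le_vv v x i).trans hx)

lemma resv_eq_resv_iff {x y : Fin n → K} (hx : vv v x ≤ 1) (hy : vv v y ≤ 1) :
    resv v x = resv v y ↔ vv v (x - y) < 1 := by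
  rw [← resv_eq_zero_iff v ((vv_sub_le v x y).trans (max_le hx hy)), resv_sub v hx hy,
    sub_eq_zero]

lemma mem_resSet_iff {S : Set (Fin n → K)} {a : Fin n → Kbar v} :
    a ∈ resSet v S ↔ ∃ x ∈ S, vv v x ≤ 1 ∧ resv v x = a := by
  simp [resSet, vv_le_iff, and_assoc]

def resSubmodule (U : Submodule K (Fin n → K)) : Submodule (Kbar v) (Fin n → Kbar v) where
  carrier := resSet v U
  add_mem' := by
    simp only [mem_resSet_iff]
    rintro _ _ ⟨x, hxU, hx, rfl⟩ ⟨y, hyU, hy, rfl⟩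
    exact ⟨x + y, U.add_mem hxU hyU, (vv_add_le v x y).trans (max_le hx hy), resv_add v hx hy⟩
  zero_mem' :=
    (mem_resSet_iff v).mpr ⟨0, U.zero_mem, by rw [vv_zero]; exact zero_le, resv_zero v⟩
  smul_mem' := by
    simp only [mem_resSet_iff]
    rintro k _ ⟨x, hxU, hx, rfl⟩
    obtain ⟨c, hc, rfl⟩ := exists_res'_eq v k
    refine ⟨c • x, U.smul_mem c hxU, ?_, resv_smul v hc hx⟩
    rw [vv_smul]
    exact mul_le_one' hc hx

variable {v} {d : ℕ} {u : Fin d → Fin n → K}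

lemma IsOrthonormal.resv_sum (hu : IsOrthonormal v u) {c : Fin d → K}
    (hc : ∀ i, v (c i) ≤ 1) :
    resv v (∑ i, c i • u i) = ∑ i, res' v (c i) • resv v (u i) := by
  rw [_root_.resv_sum v _ _ fun i _ => by rw [vv_smul, hu.vv_apply, mul_one]; exact hc i]
  exact sum_congr rfl fun i _ => resv_smul v (hc i) (hu.vv_apply i).le

lemma IsOrthonormal.linearIndependent_resv (hu : IsOrthonormal v u) :
    LinearIndependent (Kbar v) fun i => resv v (u i) := by
  refine Fintype.linearIndependent_iff.mpr fun g hg i => ?_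
  choose c hc hcg using fun i => exists_res'_eq v (g i)
  obtain rfl : (fun i => res' v (c i)) = g := funext hcg
  have hlt := (resv_eq_zero_iff v (hu.vv_le_one_iff.mpr hc)).mp (hu.resv_sum hc ▸ hg)
  exact (res'_eq_zero_iff v (hc i)).mpr (hu.vv_lt_one_iff.mp hlt i)

lemma resSubmodule_span_eq (hu : IsOrthonormal v u) :
    resSubmodule v (Submodule.span K (Set.range u)) =
      Submodule.span (Kbar v) (Set.range fun i => resv v (u i)) := by
  refine le_antisymm ?_ (Submodule.span_le.mpr ?_)
  · intro a ha
    obtain ⟨x, hx, hx1, rfl⟩ := (mem_resSet_iff v).mp ha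
    obtain ⟨c, rfl⟩ := (Submodule.mem_span_range_iff_exists_fun K).mp hx
    have hc := hu.vv_le_one_iff.mp hx1
    rw [hu.resv_sum hc]
    exact Submodule.sum_mem _ fun i _ => Submodule.smul_mem _ _ (Submodule.subset_span ⟨i, rfl⟩)
  · rintro _ ⟨i, rfl⟩
    exact (mem_resSet_iff v).mpr
      ⟨u i, Submodule.subset_span ⟨i, rfl⟩, (hu.vv_apply i).le, rfl⟩

variable (v) in
lemma finrank_resSubmodule (U : Submodule K (Fin n → K)) :
    Module.finrank (Kbar v) (resSubmodule v U) = Module.finrank K U := by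
  obtain ⟨d, u, rfl, hu⟩ := exists_isOrthonormal_span_eq v U
  rw [resSubmodule_span_eq hu, finrank_span_eq_card hu.linearIndependent_resv,
    finrank_span_eq_card hu.linearIndependent]

end Residue

section Delta

variable {v : Valuation K Γ} {n : ℕ} {U W : Submodule K (Fin n → K)} {γ : Γ}

lemma DeltaLE.resSet_subset (h : DeltaLE v U W γ) (hγ : γ < 1) :
    resSet v (U : Set (Fin n → K)) ⊆ resSet v (W : Set (Fin n → K)) := by
  intro a ha
  obtain ⟨x, hxU, hx, rfl⟩ := (mem_resSet_iff v).mp ha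
  obtain ⟨w, hwW, hxw⟩ := h x hxU
  have hxw1 : vv v (x - w) < 1 := hxw.trans_lt ((mul_le_of_le_one_left' hx).trans_lt hγ)
  have hw : vv v w ≤ 1 := sub_sub_cancel x w ▸ (vv_sub_le v x (x - w)).trans (max_le hx hxw1.le)
  exact (mem_resSet_iff v).mpr ⟨w, hwW, hw, ((resv_eq_resv_iff v hx hw).mpr hxw1).symm⟩

lemma DeltaLE.resSet_eq (hdim : Module.finrank K U = Module.finrank K W)
    (h : DeltaLE v U W γ) (hγ : γ < 1) :
    resSet v (U : Set (Fin n → K)) = resSet v (W : Set (Fin n → K)) := by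
  have hle : resSubmodule v U ≤ resSubmodule v W := h.resSet_subset hγ
  have heq := Submodule.eq_of_le_of_finrank_le hle
    (by rw [finrank_resSubmodule, finrank_resSubmodule, hdim])
  exact congrArg (fun S : Submodule (Kbar v) (Fin n → Kbar v) => (S : Set (Fin n → Kbar v))) heq

lemma exists_deltaLE_lt_one_of_resSet_subset
    (h : resSet v (U : Set (Fin n → K)) ⊆ resSet v (W : Set (Fin n → K))) :
    ∃ δ < 1, DeltaLE v U W δ := by
  obtain ⟨d, u, rfl, hu⟩ := exists_isOrthonormal_span_eq v U
  have hlift : ∀ i, ∃ w ∈ W, vv v w ≤ 1 ∧ resv v w = resv v (u i) := fun i =>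
    (mem_resSet_iff v).mp <| h <| (mem_resSet_iff v).mpr
      ⟨u i, Submodule.subset_span ⟨i, rfl⟩, (hu.vv_apply i).le, rfl⟩
  choose w hwW hw hwu using hlift
  refine ⟨univ.sup fun i => vv v (u i - w i), ?_, fun x hx => ?_⟩
  · exact (sup_lt_one_iff _ _).mpr fun i _ =>
      (resv_eq_resv_iff v (hu.vv_apply i).le (hw i)).mp (hwu i).symm
  obtain ⟨c, rfl⟩ := (Submodule.mem_span_range_iff_exists_fun K).mp hx
  refine ⟨∑ i, c i • w i, Submodule.sum_mem _ fun i _ => W.smul_mem _ (hwW i), ?_⟩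
  rw [← sum_sub_distrib, hu c]
  refine vv_sum_le v _ _ fun i _ => ?_
  rw [← smul_sub, vv_smul]
  exact mul_le_mul' (le_sup (f := fun i => v (c i)) (mem_univ i))
    (le_sup (f := fun i => vv v (u i - w i)) (mem_univ i))

end Delta

section InvertibleOverValuationRing

open Matrix

variable {v : Valuation K Γ} {n : ℕ} {M : Matrix (Fin n) (Fin n) K}

lemma vv_mulVec_le (hM : EntriesInO v M) (x : Fin n → K) : vv v (M *ᵥ x) ≤ vv v x :=
  (vv_le_iff v).mpr fun i => v.map_sum_le (s := univ) fun j _ =>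
    (v.map_mul _ _).trans_le (mul_le_of_le_one_of_le (hM i j) (le_vv v x j))

lemma MemGLO.vv_mulVec (hM : MemGLO v M) (x : Fin n → K) : vv v (M *ᵥ x) = vv v x := by
  obtain ⟨hMO, N, -, hNM, hNO⟩ := hM
  refine le_antisymm (vv_mulVec_le hMO x) ?_
  calc vv v x = vv v (N *ᵥ (M *ᵥ x)) := by rw [Matrix.mulVec_mulVec, hNM, Matrix.one_mulVec]
    _ ≤ vv v (M *ᵥ x) := vv_mulVec_le hNO _

lemma MemGLO.exists_inv (hM : MemGLO v M) : ∃ N, MemGLO v N ∧ N * M = 1 :=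
  let ⟨hMO, N, hMN, hNM, hNO⟩ := hM
  ⟨N, ⟨hNO, M, hNM, hMN, hMO⟩, hNM⟩

lemma map_mulVecLin_map_of_mul_eq_one {N : Matrix (Fin n) (Fin n) K} (hNM : N * M = 1)
    (U : Submodule K (Fin n → K)) : (U.map M.mulVecLin).map N.mulVecLin = U := by
  rw [← Submodule.map_comp, ← Matrix.mulVecLin_mul, hNM, Matrix.mulVecLin_one,
    Submodule.map_id]

variable {U W : Submodule K (Fin n → K)} {γ : Γ}

lemma DeltaLE.map (hM : MemGLO v M) (h : DeltaLE v U W γ) :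
    DeltaLE v (U.map M.mulVecLin) (W.map M.mulVecLin) γ := by
  rintro _ ⟨u, hu, rfl⟩
  obtain ⟨w, hw, huw⟩ := h u hu
  refine ⟨M *ᵥ w, ⟨w, hw, rfl⟩, ?_⟩
  rw [Matrix.mulVecLin_apply, ← Matrix.mulVec_sub, hM.vv_mulVec, hM.vv_mulVec]
  exact huw

lemma deltaLE_map_iff (hM : MemGLO v M) :
    DeltaLE v (U.map M.mulVecLin) (W.map M.mulVecLin) γ ↔ DeltaLE v U W γ := by
  obtain ⟨N, hN, hNM⟩ := hM.exists_inv
  refine ⟨fun h => ?_, DeltaLE.map hM⟩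
  simpa only [map_mulVecLin_map_of_mul_eq_one hNM] using h.map hN

lemma isDelta_map_iff (hM : MemGLO v M) :
    IsDelta v (U.map M.mulVecLin) (W.map M.mulVecLin) γ ↔ IsDelta v U W γ := by
  simp only [IsDelta, deltaLE_map_iff hM]

end InvertibleOverValuationRing

/-- (1) `res U = res W` iff `Δ(U, W) < 1`;
(2) `Δ(U, W) = Δ(M(U), M(W))` for any `M ∈ GLₙ(𝒪)`. -/
theorem delta_lt_one_and_invariance
    (v : Valuation K Γ) {n : ℕ} (U W : Submodule K (Fin n → K))
    (hdim : Module.finrank K U = Module.finrank K W) :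
    (∀ γ : Γ, IsDelta v U W γ →
      (resSet v (U : Set (Fin n → K)) = resSet v (W : Set (Fin n → K)) ↔ γ < 1)) ∧
    (∀ M : Matrix (Fin n) (Fin n) K, MemGLO v M → ∀ γ : Γ,
      (IsDelta v U W γ ↔ IsDelta v (U.map M.mulVecLin) (W.map M.mulVecLin) γ)) := by
  refine ⟨fun γ ⟨hle, hmin⟩ => ⟨fun hres => ?_, hle.resSet_eq hdim⟩,
    fun M hM γ => (isDelta_map_iff hM).symm⟩
  obtain ⟨δ, hδ, hδle⟩ := exists_deltaLE_lt_one_of_resSet_subset hres.subset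
  exact (hmin δ hδle).trans_lt hδ

end
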